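/- Let F be a field and ζ₁,...,ζ₅ ∈ F pairwise distinct, with ζ_{ij} := ζ_i − ζ_j. For the single 4-simplex 12345, define for each tetrahedron face ijkl (i<j<k<l) and each vertex p ∈ {i,j,k,l} the coordinate y_{ijkl,p} of f₃ applied to a triangle-vector as in the paper; then the coefficients (ζ_{jk}/ζ_{ik})·ζ_{ij}⁻¹-type combinations arising from f₂ followed by f₃ vanish. Concretely: for any y₁,...,y₅ ∈ F, defining y_{s,i} = (ζ_{ij}⁻¹ − ζ_{ik}⁻¹)y_i − ζ_{ij}⁻¹ y_j + ζ_{ik}⁻¹ y_k for each triangle s = {i,j,k} (with j,k the other two vertices of s ordered so that ijk is an even permutation of the increasing order), and y_{t,i} = Σ_{s ⊂ t, s ∋ i} ε_s^{(t)} y_{s,i} for each tetrahedron t (where ε_s^{(t)} = ±1 is the sign of s in the simplicial boundary of t), one has y_{t,i} = 0 for every tetrahedron t ⊂ {1,...,5} and every vertex i ∈ t. -/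

import Mathlib

/-- The sign `ε` of the face obtained by deleting vertex `m` from simplex `t`:
`(-1)^(position of m in the increasing ordering of t)` (0-based). -/
def bsign {n : ℕ} (F : Type*) [Field F] (t : Finset (Fin n)) (m : Fin n) : F :=
  (-1 : F) ^ (t.filter (· < m)).card

/-- Coordinates `y_{s,i}` of the image of `f₂`: for a triangle `s = {i,j,k}` (with `j,k`
the other two vertices of `s`, ordered so that `ijk` is an even permutation of the
increasing order of `s`), `y_{s,i} = (ζ_{ij}⁻¹ − ζ_{ik}⁻¹) y_i − ζ_{ij}⁻¹ y_j + ζ_{ik}⁻¹ y_k`. -/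
def f2coord (F : Type*) [Field F] [DecidableEq F] (ζ : Fin 5 → F) (y : Fin 5 → F)
    (s : Finset (Fin 5)) (i : Fin 5) : F :=
  -- the two other vertices of `s`, in increasing order
  let rest := s.erase i
  let p : Fin 5 := WithTop.untopD 0 rest.min
  let q : Fin 5 := WithBot.unbotD 0 rest.max
  -- cyclic ordering: if `i` is the middle vertex of `s`, swap them
  let j : Fin 5 := if (s.filter (· < i)).card = 1 then q else p
  let k : Fin 5 := if (s.filter (· < i)).card = 1 then p else q
  ((ζ i - ζ j)⁻¹ - (ζ i - ζ k)⁻¹) * y i - (ζ i - ζ j)⁻¹ * y j + (ζ i - ζ k)⁻¹ * y k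

/-!
With `φᵢ(j) = (y_i - y_j) / (ζ_i - ζ_j)`, the `f₂`-coordinate is
`y_{s,i} = φᵢ(j) - φᵢ(k)`, i.e. up to the sign of `i` in `s` it is the coboundary of `φᵢ` on
the edge `s ∖ {i}` of the link of `i`.
The boundary signs of `t` and of `t ∖ {m}` combine into those of the link `t ∖ {i}`, so `y_{t,i}`
is `±(δδφᵢ)(t ∖ {i}) = 0`.
-/

section LinearOrder

variable {α : Type*} [LinearOrder α]

lemma card_filter_lt_erase_add_one {t : Finset α} {m i : α} (hm : m ∈ t) (hmi : m < i) :
    ((t.erase m).filter (· < i)).card + 1 = (t.filter (· < i)).card := by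
  rw [Finset.filter_erase, Finset.card_erase_add_one (Finset.mem_filter.2 ⟨hm, hmi⟩)]

lemma filter_lt_erase_of_lt {t : Finset α} {m i : α} (hmi : m < i) :
    (t.erase i).filter (· < m) = t.filter (· < m) := by
  rw [Finset.filter_erase, Finset.erase_eq_of_notMem (by simp [hmi.not_gt])]

lemma exists_lt_eq_pair {s : Finset α} (hs : s.card = 2) : ∃ p q, p < q ∧ s = {p, q} := by
  obtain ⟨a, b, hab, rfl⟩ := Finset.card_eq_two.1 hs
  rcases hab.lt_or_gt with h | h
  · exact ⟨a, b, h, rfl⟩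
  · exact ⟨b, a, h, Finset.pair_comm a b⟩

end LinearOrder

section Coboundary

variable {F : Type*} [Field F] {n : ℕ}

def coboundary (ω : Finset (Fin n) → F) (t : Finset (Fin n)) : F :=
  ∑ m ∈ t, bsign F t m * ω (t.erase m)

lemma bsign_mul_bsign_erase_of_lt {t : Finset (Fin n)} {m i : Fin n} (hm : m ∈ t)
    (hmi : m < i) :
    bsign F t m * bsign F (t.erase m) i = -(bsign F t i * bsign F (t.erase i) m) := by
  simp only [bsign, ← card_filter_lt_erase_add_one hm hmi, filter_lt_erase_of_lt hmi]
  ring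

lemma bsign_mul_bsign_erase {t : Finset (Fin n)} {m i : Fin n} (hm : m ∈ t) (hi : i ∈ t)
    (hmi : m ≠ i) :
    bsign F t m * bsign F (t.erase m) i = -(bsign F t i * bsign F (t.erase i) m) := by
  rcases hmi.lt_or_gt with h | h
  · exact bsign_mul_bsign_erase_of_lt hm h
  · rw [bsign_mul_bsign_erase_of_lt hi h, neg_neg]

theorem coboundary_coboundary (ω : Finset (Fin n) → F) (t : Finset (Fin n)) :
    coboundary (coboundary ω) t = 0 := by
  let f : Fin n × Fin n → F := fun p =>
    bsign F t p.1 * bsign F (t.erase p.1) p.2 * ω ((t.erase p.1).erase p.2)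
  have hsum : coboundary (coboundary ω) t = ∑ p ∈ t.offDiag, f p := by
    rw [Finset.sum_finset_product t.offDiag t (fun m => t.erase m)
      (fun p => by rw [Finset.mem_offDiag, Finset.mem_erase]; tauto)]
    simp only [coboundary, Finset.mul_sum, mul_assoc, f]
  rw [hsum]
  refine Finset.sum_involution (fun p _ => p.swap) (fun p hp => ?_) (fun p hp _ => ?_)
    (fun p hp => Finset.mem_offDiag.2 ?_) (fun _ _ => rfl)
  all_goals obtain ⟨hm, hi, hmi⟩ := Finset.mem_offDiag.1 hp
  · simp only [f, Prod.fst_swap, Prod.snd_swap, Finset.erase_right_comm (a := p.2),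
      bsign_mul_bsign_erase hm hi hmi]
    ring
  · exact fun h => hmi (congrArg Prod.snd h)
  · exact ⟨hi, hm, hmi.symm⟩

lemma coboundary_pair (ω : Finset (Fin n) → F) {p q : Fin n} (hpq : p < q) :
    coboundary ω {p, q} = ω {q} - ω {p} := by
  rw [coboundary, Finset.sum_pair hpq.ne, Finset.erase_insert (by simpa using hpq.ne),
    Finset.erase_insert_of_ne hpq.ne, Finset.erase_singleton, insert_empty_eq]
  simp only [bsign, Finset.filter_insert, Finset.filter_singleton, lt_self_iff_false, hpq,
    hpq.not_gt, ↓reduceIte, insert_empty_eq, Finset.card_empty, Finset.card_singleton,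
    pow_zero, pow_one, one_mul, neg_mul]
  ring

def divDiff {ι : Type*} (ζ y : ι → F) (i j : ι) : F :=
  (ζ i - ζ j)⁻¹ * (y i - y j)

/-- Any 0-cochain taking the value `divDiff ζ y i w` on `{w}` would do in place of
`v ↦ ∑ w ∈ v, divDiff ζ y i w`. -/
lemma f2coord_eq_neg_bsign_mul_coboundary [DecidableEq F] (ζ y : Fin 5 → F)
    {s : Finset (Fin 5)} {i : Fin 5} (hs : s.card = 3) (hi : i ∈ s) :
    f2coord F ζ y s i =
      -(bsign F s i * coboundary (fun v => ∑ w ∈ v, divDiff ζ y i w) (s.erase i)) := by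
  obtain ⟨p, q, hpq, hpair⟩ := exists_lt_eq_pair (s := s.erase i) (by simp [hi, hs])
  have hpos : (s.filter (· < i)).card ≤ 2 := by
    rw [← Finset.card_pair hpq.ne, ← hpair]
    exact Finset.card_le_card fun x hx => by
      simp only [Finset.mem_filter] at hx
      exact Finset.mem_erase.2 ⟨hx.2.ne, hx.1⟩
  simp only [f2coord, hpair, coboundary_pair _ hpq, Finset.sum_singleton, divDiff, bsign,
    Finset.min_insert, Finset.max_insert, Finset.min_singleton, Finset.max_singleton,
    WithTop.coe_le_coe, WithBot.coe_le_coe, hpq.le, inf_of_le_left, sup_of_le_right,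
    WithTop.untopD_coe, WithBot.unbotD_coe]
  generalize (s.filter (· < i)).card = c at hpos ⊢
  interval_cases c <;>
    simp only [zero_ne_one, OfNat.ofNat_ne_one, ↓reduceIte, pow_zero, pow_one, even_two,
      Even.neg_pow, one_pow, one_mul, neg_mul, neg_sub] <;>
    ring

end Coboundary

theorem f3_comp_f2_eq_zero (F : Type*) [Field F] [DecidableEq F] (ζ : Fin 5 → F) (y : Fin 5 → F)
    (t : Finset (Fin 5)) (ht : t.card = 4) (i : Fin 5) (hi : i ∈ t) :
    ∑ m ∈ t.erase i, bsign F t m * f2coord F ζ y (t.erase m) i = 0 := by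
  set ω : Finset (Fin 5) → F := fun v => ∑ w ∈ v, divDiff ζ y i w
  have hface (m : Fin 5) (hm : m ∈ t.erase i) : bsign F t m * f2coord F ζ y (t.erase m) i =
      bsign F t i * (bsign F (t.erase i) m * coboundary ω ((t.erase i).erase m)) := by
    obtain ⟨hmi, hmt⟩ := Finset.mem_erase.1 hm
    rw [f2coord_eq_neg_bsign_mul_coboundary ζ y (by rw [Finset.card_erase_of_mem hmt, ht])
      (Finset.mem_erase.2 ⟨hmi.symm, hi⟩), Finset.erase_right_comm, ← mul_neg, ← mul_assoc,
      bsign_mul_bsign_erase hmt hi hmi]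
    ring
  calc ∑ m ∈ t.erase i, bsign F t m * f2coord F ζ y (t.erase m) i
      = bsign F t i * coboundary (coboundary ω) (t.erase i) := by
        rw [coboundary, Finset.mul_sum]
        exact Finset.sum_congr rfl hface
    _ = 0 := by rw [coboundary_coboundary, mul_zero]
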